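/- arXiv:1105.0783 — 5 statements merged into one kernel-verified Lean document; each statement's English description precedes it below -/
import Mathlib

section
/- Let (a_m)_{m≥1} be a bounded sequence of real numbers and (ε_m)_{m≥1} a sequence of real numbers with ε_m → 0 such that a_{m+1} − a_m ≤ ε_m for every m. Then the set of cluster points of (a_m) is exactly the closed interval [liminf_{m→∞} a_m, limsup_{m→∞} a_m]; in particular, every real number t with liminf_{m→∞} a_m ≤ t ≤ limsup_{m→∞} a_m is the limit of some subsequence of (a_m). -/
/-!
A cluster point of a sequence is caught between `liminf` and `limsup`. Conversely, suppose some
`t` strictly between them were not a cluster point, so that the sequence eventually avoids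
`(t - δ, t + δ)`. Once the upward steps are below `δ`, the sequence cannot jump over this gap, so
after it first lands below `t - δ` it stays there; hence it ends up either below `t - δ` or
above `t + δ`, contradicting `liminf ≤ t ≤ limsup`.
-/

open Filter Set Topology

theorem exists_strictMono_tendsto_comp_iff_mapClusterPt {X : Type*} [TopologicalSpace X]
    [FirstCountableTopology X] {u : ℕ → X} {x : X} :
    (∃ φ : ℕ → ℕ, StrictMono φ ∧ Tendsto (u ∘ φ) atTop (𝓝 x)) ↔ MapClusterPt x atTop u :=
  ⟨fun ⟨_, hφ, hx⟩ => hx.mapClusterPt.of_comp hφ.tendsto_atTop, MapClusterPt.tendsto_subseq⟩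

section Gap

variable {α : Type*} [LinearOrder α] {a : ℕ → α} {c d : α}

theorem forall_ge_le_of_gap {m : ℕ} (hgap : ∀ k ≥ m, a k ∉ Ioo c d)
    (hjump : ∀ k ≥ m, a k ≤ c → a (k + 1) < d) (hm : a m ≤ c) : ∀ k ≥ m, a k ≤ c := by
  intro k hk
  induction k, hk using Nat.le_induction with
  | base => exact hm
  | succ k hk ih =>
    by_contra hc
    exact hgap (k + 1) (by omega) ⟨not_le.1 hc, hjump k hk ih⟩

theorem eventually_le_or_eventually_ge_of_gap (hgap : ∀ᶠ k in atTop, a k ∉ Ioo c d)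
    (hjump : ∀ᶠ k in atTop, a k ≤ c → a (k + 1) < d) :
    (∀ᶠ k in atTop, a k ≤ c) ∨ ∀ᶠ k in atTop, d ≤ a k := by
  obtain ⟨N, hN⟩ := eventually_atTop.1 (hgap.and hjump)
  by_cases hlow : ∃ m ≥ N, a m ≤ c
  · obtain ⟨m, hmN, hm⟩ := hlow
    exact .inl (eventually_atTop.2 ⟨m, forall_ge_le_of_gap (fun k hk => (hN k (hmN.trans hk)).1)
      (fun k hk => (hN k (hmN.trans hk)).2) hm⟩)
  · push Not at hlow
    refine .inr (eventually_atTop.2 ⟨N, fun k hk => ?_⟩)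
    by_contra hd
    exact (hN k hk).1 ⟨hlow k hk, not_le.1 hd⟩

end Gap

theorem mapClusterPt_of_mem_Icc_liminf_limsup {a ε : ℕ → ℝ} (hε : Tendsto ε atTop (𝓝 0))
    (hstep : ∀ m, a (m + 1) - a m ≤ ε m) (hbddAbove : IsBoundedUnder (· ≤ ·) atTop a)
    (hbddBelow : IsBoundedUnder (· ≥ ·) atTop a) {t : ℝ}
    (ht : t ∈ Icc (liminf a atTop) (limsup a atTop)) : MapClusterPt t atTop a := by
  rw [(nhds_basis_Ioo_pos t).mapClusterPt_iff_frequently]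
  intro δ hδ
  by_contra hfar
  have hjump : ∀ᶠ m in atTop, a m ≤ t - δ → a (m + 1) < t + δ := by
    filter_upwards [hε.eventually (gt_mem_nhds hδ)] with m hm hle
    linarith [hstep m]
  rcases eventually_le_or_eventually_ge_of_gap (not_frequently.1 hfar) hjump with hlow | hhigh
  · linarith [ht.2, limsup_le_of_le hbddBelow.isCoboundedUnder_le hlow]
  · linarith [ht.1, le_liminf_of_le hbddAbove.isCoboundedUnder_ge hhigh]

/-- If `(a m)` is a bounded real sequence and `ε m → 0` with
`a (m+1) - a m ≤ ε m` for all `m`, then the set of cluster points (limits of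
subsequences) of `a` is exactly the closed interval `[liminf a, limsup a]`. -/
theorem cluster_points_eq_Icc_liminf_limsup
    (a ε : ℕ → ℝ)
    (hbd : ∃ C : ℝ, ∀ m, |a m| ≤ C)
    (hε : Tendsto ε atTop (nhds 0))
    (hstep : ∀ m, a (m + 1) - a m ≤ ε m) :
    {t : ℝ | ∃ φ : ℕ → ℕ, StrictMono φ ∧ Tendsto (a ∘ φ) atTop (nhds t)}
      = Set.Icc (liminf a atTop) (limsup a atTop) := by
  obtain ⟨C, hC⟩ := hbd
  have hbddAbove : IsBoundedUnder (· ≤ ·) atTop a :=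
    isBoundedUnder_of ⟨C, fun m => (abs_le.1 (hC m)).2⟩
  have hbddBelow : IsBoundedUnder (· ≥ ·) atTop a :=
    isBoundedUnder_of ⟨-C, fun m => (abs_le.1 (hC m)).1⟩
  ext t
  rw [mem_ofPred_eq, exists_strictMono_tendsto_comp_iff_mapClusterPt]
  exact ⟨fun h => ⟨h.liminf_le hbddBelow, h.le_limsup hbddAbove⟩,
    mapClusterPt_of_mem_Icc_liminf_limsup hε hstep hbddAbove hbddBelow⟩
end

section
/- Let δ > 0 and let K1, K2 : ℝ → ℝ be continuous with δ² ≤ K1(t) ≤ K2(t) for all t ∈ ℝ, and suppose that the set {t ∈ ℝ : K1(t) = K2(t)} has no accumulation point in ℝ. For j = 1, 2 and s ∈ ℝ let y_{j,s} be the solution of y'' + K_j·y = 0 with y(s) = 0, y'(s) = 1, and let z_j(s) be its least zero in (s, ∞) (which exists since K_j(t) ≥ δ² > 0). Then z_2(s) < z_1(s), strictly, for every s ∈ ℝ. -/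
/-!
Suppose `z₁(s) ≤ z₂(s)`, so that `y₁` and `y₂` are both positive on `(s, z₁(s))`. The Wronskian
`W = y₁ y₂' - y₁' y₂` vanishes at `s`, satisfies `W' = (K₁ - K₂) y₁ y₂ ≤ 0` on `(s, z₁(s))`, and
`W(z₁(s)) = -y₁'(z₁(s)) y₂(z₁(s)) ≥ 0`. Hence `W` is constant there, so `(K₁ - K₂) y₁ y₂ = 0` and
`K₁ = K₂` on a whole open interval, whose points are accumulation points of `{K₁ = K₂}`.
-/

open Filter Set Topology

lemma HasDerivAt.eventually_slope_pos {f : ℝ → ℝ} {a x : ℝ} (hd : HasDerivAt f a x)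
    (ha : 0 < a) : ∀ᶠ t in 𝓝[≠] x, 0 < slope f x t :=
  (hasDerivAt_iff_tendsto_slope.mp hd).eventually (eventually_gt_nhds ha)

lemma HasDerivAt.nonpos_of_eventually_nonneg_nhdsLT {f : ℝ → ℝ} {a x : ℝ}
    (hd : HasDerivAt f a x) (hx : f x = 0) (hf : ∀ᶠ t in 𝓝[<] x, 0 ≤ f t) : a ≤ 0 := by
  by_contra! ha
  obtain ⟨t, hslope, hft, htx⟩ :=
    (((hd.eventually_slope_pos ha).filter_mono (nhdsLT_le_nhdsNE x)).and
      (hf.and self_mem_nhdsWithin)).exists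
  exact (neg_of_slope_pos htx hslope hx).not_ge hft

lemma IsPreconnected.pos_of_forall_ne_zero {X : Type*} [TopologicalSpace X] {S : Set X}
    {f : X → ℝ} {u : X} (hS : IsPreconnected S) (hf : ContinuousOn f S)
    (hne : ∀ t ∈ S, f t ≠ 0) (hu : u ∈ S) (hfu : 0 < f u) : ∀ t ∈ S, 0 < f t := by
  intro t ht
  by_contra! hft
  obtain ⟨c, hc, hfc⟩ := hS.intermediate_value ht hu hf ⟨hft, hfu.le⟩
  exact hne c hc hfc

lemma pos_on_Ioo_of_hasDerivAt_pos {y : ℝ → ℝ} {a s z : ℝ} (hd : HasDerivAt y a s)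
    (ha : 0 < a) (hs : y s = 0) (hy : ContinuousOn y (Ioo s z))
    (hne : ∀ t ∈ Ioo s z, y t ≠ 0) : ∀ t ∈ Ioo s z, 0 < y t := by
  intro t ht
  obtain ⟨u, hslope, hu⟩ :=
    (((hd.eventually_slope_pos ha).filter_mono (nhdsGT_le_nhdsNE s)).and
      (Ioo_mem_nhdsGT ht.1)).exists
  exact isPreconnected_Ioo.pos_of_forall_ne_zero hy hne ⟨hu.1, hu.2.trans ht.2⟩
    (pos_of_slope_pos hu.1 hslope hs) t ht

lemma eqOn_zero_of_hasDerivAt_nonpos_of_apply_le {f f' : ℝ → ℝ} {a b : ℝ}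
    (hf : ContinuousOn f (Icc a b)) (hd : ∀ t ∈ Ioo a b, HasDerivAt f (f' t) t)
    (hf' : ∀ t ∈ Ioo a b, f' t ≤ 0) (hab : f a ≤ f b) : EqOn f' 0 (Ioo a b) := by
  have hanti : AntitoneOn f (Icc a b) :=
    antitoneOn_of_hasDerivWithinAt_nonpos (convex_Icc a b) hf
      (by simpa only [interior_Icc] using fun t ht ↦ (hd t ht).hasDerivWithinAt)
      (by simpa only [interior_Icc] using hf')
  intro t ht
  have hle : a ≤ b := (ht.1.trans ht.2).le
  have hconst : f =ᶠ[𝓝 t] fun _ ↦ f a := by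
    filter_upwards [Ioo_mem_nhds ht.1 ht.2] with u hu
    have hua : f u ≤ f a := hanti (left_mem_Icc.2 hle) (Ioo_subset_Icc_self hu) hu.1.le
    have hbu : f b ≤ f u := hanti (Ioo_subset_Icc_self hu) (right_mem_Icc.2 hle) hu.2.le
    linarith
  exact (hd t ht).unique ((hasDerivAt_const t (f a)).congr_of_eventuallyEq hconst)

lemma accPt_principal_of_mem_nhds {X : Type*} [TopologicalSpace X] {x : X} {C : Set X}
    [(𝓝[≠] x).NeBot] (hC : C ∈ 𝓝 x) : AccPt x (𝓟 C) :=
  accPt_iff_frequently_nhdsNE.2 (eventually_mem_set.2 (mem_nhdsWithin_of_mem_nhds hC)).frequently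

def wronskian (y₁ y₁' y₂ y₂' : ℝ → ℝ) (t : ℝ) : ℝ :=
  y₁ t * y₂' t - y₁' t * y₂ t

section Hill

variable {K₁ K₂ y₁ y₁' y₂ y₂' : ℝ → ℝ}

lemma hasDerivAt_wronskian {t : ℝ} (hy₁ : HasDerivAt y₁ (y₁' t) t)
    (hy₁' : HasDerivAt y₁' (-(K₁ t) * y₁ t) t) (hy₂ : HasDerivAt y₂ (y₂' t) t)
    (hy₂' : HasDerivAt y₂' (-(K₂ t) * y₂ t) t) :
    HasDerivAt (wronskian y₁ y₁' y₂ y₂') ((K₁ t - K₂ t) * (y₁ t * y₂ t)) t := by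
  exact ((hy₁.mul hy₂').sub (hy₁'.mul hy₂)).congr_deriv (by ring)

lemma eqOn_of_sturm_comparison {s z : ℝ} (hsz : s < z)
    (hy₁ : ∀ t, HasDerivAt y₁ (y₁' t) t) (hy₁' : ∀ t, HasDerivAt y₁' (-(K₁ t) * y₁ t) t)
    (hy₂ : ∀ t, HasDerivAt y₂ (y₂' t) t) (hy₂' : ∀ t, HasDerivAt y₂' (-(K₂ t) * y₂ t) t)
    (hK : ∀ t ∈ Ioo s z, K₁ t ≤ K₂ t) (hy₁s : y₁ s = 0) (hy₂s : y₂ s = 0) (hy₁z : y₁ z = 0)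
    (hy₂z : 0 ≤ y₂ z) (hpos₁ : ∀ t ∈ Ioo s z, 0 < y₁ t) (hpos₂ : ∀ t ∈ Ioo s z, 0 < y₂ t) :
    EqOn K₁ K₂ (Ioo s z) := by
  have hW t := hasDerivAt_wronskian (hy₁ t) (hy₁' t) (hy₂ t) (hy₂' t)
  have hWs : wronskian y₁ y₁' y₂ y₂' s = 0 := by simp [wronskian, hy₁s, hy₂s]
  have hy₁'z : y₁' z ≤ 0 := (hy₁ z).nonpos_of_eventually_nonneg_nhdsLT hy₁z <|
    mem_of_superset (Ioo_mem_nhdsLT hsz) fun t ht ↦ (hpos₁ t ht).le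
  have hWz : 0 ≤ wronskian y₁ y₁' y₂ y₂' z := by
    simpa [wronskian, hy₁z] using mul_nonpos_of_nonpos_of_nonneg hy₁'z hy₂z
  have hW' : EqOn (fun t ↦ (K₁ t - K₂ t) * (y₁ t * y₂ t)) 0 (Ioo s z) :=
    eqOn_zero_of_hasDerivAt_nonpos_of_apply_le (fun t _ ↦ (hW t).continuousAt.continuousWithinAt)
      (fun t _ ↦ hW t)
      (fun t ht ↦ mul_nonpos_of_nonpos_of_nonneg (sub_nonpos.2 (hK t ht))
        (mul_pos (hpos₁ t ht) (hpos₂ t ht)).le)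
      (hWs.trans_le hWz)
  intro t ht
  have hprod : y₁ t * y₂ t ≠ 0 := (mul_pos (hpos₁ t ht) (hpos₂ t ht)).ne'
  exact sub_eq_zero.1 ((mul_eq_zero.1 (hW' ht)).resolve_right hprod)

end Hill

theorem first_conjugate_point_strict_comparison_general
    (K1 K2 : ℝ → ℝ)
    (hle : ∀ t : ℝ, K1 t ≤ K2 t)
    (hacc : ∀ x : ℝ, ¬ AccPt x (Filter.principal {t : ℝ | K1 t = K2 t}))
    (y1 y1' y2 y2' : ℝ → ℝ → ℝ)
    (hy1 : ∀ s t : ℝ, HasDerivAt (y1 s) (y1' s t) t)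
    (hy1' : ∀ s t : ℝ, HasDerivAt (y1' s) (-(K1 t) * y1 s t) t)
    (hy2 : ∀ s t : ℝ, HasDerivAt (y2 s) (y2' s t) t)
    (hy2' : ∀ s t : ℝ, HasDerivAt (y2' s) (-(K2 t) * y2 s t) t)
    (h10 : ∀ s : ℝ, y1 s s = 0) (h11 : ∀ s : ℝ, y1' s s = 1)
    (h20 : ∀ s : ℝ, y2 s s = 0) (h21 : ∀ s : ℝ, y2' s s = 1)
    (z1 z2 : ℝ → ℝ)
    (hz1 : ∀ s : ℝ, s < z1 s ∧ y1 s (z1 s) = 0 ∧ ∀ t : ℝ, s < t → t < z1 s → y1 s t ≠ 0)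
    (hz2 : ∀ s : ℝ, s < z2 s ∧ y2 s (z2 s) = 0 ∧ ∀ t : ℝ, s < t → t < z2 s → y2 s t ≠ 0) :
    ∀ s : ℝ, z2 s < z1 s := by
  intro s
  by_contra! hz
  obtain ⟨hs, hy1z, hne1⟩ := hz1 s
  obtain ⟨-, hy2z, hne2⟩ := hz2 s
  have hpos1 := pos_on_Ioo_of_hasDerivAt_pos (hy1 s s) (h11 s ▸ one_pos) (h10 s)
    (fun t _ ↦ (hy1 s t).continuousAt.continuousWithinAt) fun t ht ↦ hne1 t ht.1 ht.2
  have hpos2 := pos_on_Ioo_of_hasDerivAt_pos (hy2 s s) (h21 s ▸ one_pos) (h20 s)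
    (fun t _ ↦ (hy2 s t).continuousAt.continuousWithinAt) fun t ht ↦ hne2 t ht.1 ht.2
  have hy2z1 : 0 ≤ y2 s (z1 s) := by
    rcases hz.lt_or_eq with hlt | heq
    · exact (hpos2 _ ⟨hs, hlt⟩).le
    · exact (heq ▸ hy2z).ge
  have hK : EqOn K1 K2 (Ioo s (z1 s)) :=
    eqOn_of_sturm_comparison hs (hy1 s) (hy1' s) (hy2 s) (hy2' s) (fun t _ ↦ hle t) (h10 s)
      (h20 s) hy1z hy2z1 hpos1 fun t ht ↦ hpos2 t ⟨ht.1, ht.2.trans_le hz⟩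
  obtain ⟨m, hm⟩ := exists_between hs
  exact hacc m (accPt_principal_of_mem_nhds (mem_of_superset (Ioo_mem_nhds hm.1 hm.2) hK))

/-- strict comparison of first conjugate points at every basepoint.
With `δ² ≤ K1 ≤ K2`, `K1 = K2` only on a set with no accumulation point, and
`y j s` the solution of `y'' + K_j y = 0` with `y s = 0`, `y' s = 1`, the least
zero `z2 s` of `y2 s` in `(s, ∞)` is strictly smaller than the least zero
`z1 s` of `y1 s`, for every `s`. -/
theorem first_conjugate_point_strict_comparison
    (δ : ℝ) (hδ : 0 < δ)
    (K1 K2 : ℝ → ℝ) (hK1 : Continuous K1) (hK2 : Continuous K2)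
    (hlb : ∀ t : ℝ, δ ^ 2 ≤ K1 t) (hle : ∀ t : ℝ, K1 t ≤ K2 t)
    (hacc : ∀ x : ℝ, ¬ AccPt x (Filter.principal {t : ℝ | K1 t = K2 t}))
    (y1 y1' y2 y2' : ℝ → ℝ → ℝ)
    (hy1 : ∀ s t : ℝ, HasDerivAt (y1 s) (y1' s t) t)
    (hy1' : ∀ s t : ℝ, HasDerivAt (y1' s) (-(K1 t) * y1 s t) t)
    (hy2 : ∀ s t : ℝ, HasDerivAt (y2 s) (y2' s t) t)
    (hy2' : ∀ s t : ℝ, HasDerivAt (y2' s) (-(K2 t) * y2 s t) t)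
    (h10 : ∀ s : ℝ, y1 s s = 0) (h11 : ∀ s : ℝ, y1' s s = 1)
    (h20 : ∀ s : ℝ, y2 s s = 0) (h21 : ∀ s : ℝ, y2' s s = 1)
    (z1 z2 : ℝ → ℝ)
    (hz1 : ∀ s : ℝ, s < z1 s ∧ y1 s (z1 s) = 0 ∧ ∀ t : ℝ, s < t → t < z1 s → y1 s t ≠ 0)
    (hz2 : ∀ s : ℝ, s < z2 s ∧ y2 s (z2 s) = 0 ∧ ∀ t : ℝ, s < t → t < z2 s → y2 s t ≠ 0) :
    ∀ s : ℝ, z2 s < z1 s :=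
  first_conjugate_point_strict_comparison_general K1 K2 hle hacc y1 y1' y2 y2' hy1 hy1' hy2 hy2' h10
    h11 h20 h21 z1 z2 hz1 hz2
end

section
/- Let L > 0, δ > 0 and let K1, K2 : ℝ → ℝ be continuous and L-periodic (K_j(t + L) = K_j(t) for all t) with δ² ≤ K1(t) ≤ K2(t) for all t, and assume the set {t ∈ ℝ : K1(t) = K2(t)} has no accumulation point in ℝ. For j = 1, 2 and s ∈ ℝ let d_j(s) = z_j(s) − s, where z_j(s) is the least zero in (s, ∞) of the solution of y'' + K_j·y = 0 with y(s) = 0, y'(s) = 1. Then each function d_j : ℝ → (0, ∞) is continuous and L-periodic, and there exists ρ ∈ (0, 1) such that d_2(s) ≤ ρ·d_1(s) for all s ∈ ℝ. -/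
/-!
Solutions with `y(s) = 0` are linear combinations of two fixed solutions, so `y s t` is jointly
continuous in `(s, t)`; as the first zero `z(s)` is simple, it moves continuously with `s`.
Uniqueness of solutions and periodicity of `K` give `z(s + L) = z(s) + L`. For the comparison, the
Wronskian `y₁ y₂' - y₂ y₁'` vanishes at `s`, is `≥ 0` at `z₁(s)` if `z₂(s) ≥ z₁(s)`, and has
derivative `(K₁ - K₂) y₁ y₂ ≤ 0` in between; so it vanishes on `[s, z₁(s)]`, forcing `K₁ = K₂` on
an interval, which the accumulation hypothesis forbids. Hence `d₂ < d₁`, and the continuous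
periodic ratio `d₂ / d₁` attains a maximum `ρ < 1`.
-/

open Set Filter Topology Function

structure IsHillSolution (K f f' : ℝ → ℝ) : Prop where
  hasDerivAt : ∀ t, HasDerivAt f (f' t) t
  hasDerivAt' : ∀ t, HasDerivAt f' (-(K t) * f t) t

structure IsFirstZeroAfter (f : ℝ → ℝ) (s z : ℝ) : Prop where
  lt : s < z
  eq_zero : f z = 0
  ne_zero : ∀ t, s < t → t < z → f t ≠ 0

lemma lipschitzWith_hillField (k : ℝ) :
    LipschitzWith (max 1 ‖k‖₊) fun p : ℝ × ℝ => (p.2, -k * p.1) := by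
  simpa using (LipschitzWith.prod_snd (α := ℝ) (β := ℝ)).prodMk
    ((lipschitzWith_smul (β := ℝ) (-k)).comp (LipschitzWith.prod_fst (α := ℝ) (β := ℝ)))

namespace IsHillSolution

variable {K K₁ K₂ f f' g g' : ℝ → ℝ}

lemma zero : IsHillSolution K 0 0 :=
  ⟨fun t => hasDerivAt_const t 0, fun t => (hasDerivAt_const t 0).congr_deriv (by simp)⟩

lemma continuous (hf : IsHillSolution K f f') : Continuous f :=
  continuous_iff_continuousAt.2 fun t => (hf.hasDerivAt t).continuousAt

lemma continuous' (hf : IsHillSolution K f f') : Continuous f' :=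
  continuous_iff_continuousAt.2 fun t => (hf.hasDerivAt' t).continuousAt

lemma const_mul (hf : IsHillSolution K f f') (a : ℝ) :
    IsHillSolution K (fun t => a * f t) (fun t => a * f' t) :=
  ⟨fun t => (hf.hasDerivAt t).const_mul a,
    fun t => by simpa [mul_left_comm] using (hf.hasDerivAt' t).const_mul a⟩

lemma add (hf : IsHillSolution K f f') (hg : IsHillSolution K g g') :
    IsHillSolution K (fun t => f t + g t) (fun t => f' t + g' t) :=
  ⟨fun t => (hf.hasDerivAt t).fun_add (hg.hasDerivAt t),
    fun t => by simpa [mul_add] using (hf.hasDerivAt' t).fun_add (hg.hasDerivAt' t)⟩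

lemma comp_add_const (hf : IsHillSolution K f f') (c : ℝ) :
    IsHillSolution (fun t => K (t + c)) (fun t => f (t + c)) (fun t => f' (t + c)) :=
  ⟨fun t => (hf.hasDerivAt (t + c)).comp_add_const t c,
    fun t => (hf.hasDerivAt' (t + c)).comp_add_const t c⟩

lemma hasDerivAt_wronskian (hf : IsHillSolution K₁ f f') (hg : IsHillSolution K₂ g g') (t : ℝ) :
    HasDerivAt (fun t => f t * g' t - g t * f' t) ((K₁ t - K₂ t) * (f t * g t)) t := by
  refine (((hf.hasDerivAt t).fun_mul (hg.hasDerivAt' t)).fun_sub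
    ((hg.hasDerivAt t).fun_mul (hf.hasDerivAt' t))).congr_deriv ?_
  ring

lemma wronskian_eq (hf : IsHillSolution K f f') (hg : IsHillSolution K g g') (t t₀ : ℝ) :
    f t * g' t - g t * f' t = f t₀ * g' t₀ - g t₀ * f' t₀ := by
  have hw := hasDerivAt_wronskian hf hg
  simp only [sub_self, zero_mul] at hw
  exact is_const_of_deriv_eq_zero (fun t => (hw t).differentiableAt) (fun t => (hw t).deriv) t t₀

lemma unique (hK : Continuous K) (hf : IsHillSolution K f f') (hg : IsHillSolution K g g')
    {t₀ : ℝ} (h₀ : f t₀ = g t₀) (h₀' : f' t₀ = g' t₀) : f = g ∧ f' = g' := by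
  let v : ℝ → ℝ × ℝ → ℝ × ℝ := fun t p => (p.2, -K t * p.1)
  have hF : ∀ t, HasDerivAt (fun t => (f t, f' t)) (v t (f t, f' t)) t := fun t =>
    (hf.hasDerivAt t).prodMk (hf.hasDerivAt' t)
  have hG : ∀ t, HasDerivAt (fun t => (g t, g' t)) (v t (g t, g' t)) t := fun t =>
    (hg.hasDerivAt t).prodMk (hg.hasDerivAt' t)
  -- Local uniqueness needs a Lipschitz bound only near each time: the coincidence set is open.
  have hopen : IsOpen {t | (f t, f' t) = (g t, g' t)} := by
    refine isOpen_iff_mem_nhds.2 fun t ht => ?_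
    have hbound : ∀ᶠ r in 𝓝 t, ‖K r‖₊ < ‖K t‖₊ + 1 :=
      hK.continuousAt.nnnorm.eventually (gt_mem_nhds (lt_add_one _))
    refine ODE_solution_unique_of_eventually (K := ‖K t‖₊ + 1) (s := fun _ => univ)
      (hbound.mono fun r hr => ?_) (.of_forall fun r => ⟨hF r, trivial⟩)
      (.of_forall fun r => ⟨hG r, trivial⟩) ht
    exact ((lipschitzWith_hillField (K r)).weaken (max_le le_add_self hr.le)).lipschitzOnWith
  have hclosed : IsClosed {t | (f t, f' t) = (g t, g' t)} :=
    isClosed_eq (hf.continuous.prodMk hf.continuous') (hg.continuous.prodMk hg.continuous')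
  have huniv := IsClopen.eq_univ ⟨hclosed, hopen⟩ ⟨t₀, Prod.ext h₀ h₀'⟩
  simp only [eq_univ_iff_forall, mem_ofPred_eq, Prod.ext_iff] at huniv
  exact ⟨funext fun t => (huniv t).1, funext fun t => (huniv t).2⟩

end IsHillSolution

section Sign

variable {f : ℝ → ℝ} {d a b : ℝ}

lemma exists_pos_of_hasDerivAt_pos (hf : HasDerivAt f d a) (hd : 0 < d) (ha : f a = 0)
    (hab : a < b) : ∃ t ∈ Ioo a b, 0 < f t := by
  obtain ⟨t, hslope, ht⟩ := ((((hasDerivAt_iff_tendsto_slope.mp hf).mono_left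
    (nhdsGT_le_nhdsNE a)).eventually (eventually_gt_nhds hd)).and (Ioo_mem_nhdsGT hab)).exists
  exact ⟨t, ht, pos_of_slope_pos ht.1 hslope ha⟩

lemma exists_neg_of_hasDerivAt_pos (hf : HasDerivAt f d a) (hd : 0 < d) (ha : f a = 0)
    (hba : b < a) : ∃ t ∈ Ioo b a, f t < 0 := by
  obtain ⟨t, hslope, ht⟩ := ((((hasDerivAt_iff_tendsto_slope.mp hf).mono_left
    (nhdsLT_le_nhdsNE a)).eventually (eventually_gt_nhds hd)).and (Ioo_mem_nhdsLT hba)).exists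
  exact ⟨t, ht, neg_of_slope_pos ht.2 hslope ha⟩

end Sign

namespace IsFirstZeroAfter

variable {f f' K : ℝ → ℝ} {s z z' d c : ℝ}

lemma le_of_eq_zero (hz : IsFirstZeroAfter f s z) {t : ℝ} (hst : s < t) (ht : f t = 0) :
    z ≤ t :=
  not_lt.1 fun htz => hz.ne_zero t hst htz ht

lemma unique (hz : IsFirstZeroAfter f s z) (hz' : IsFirstZeroAfter f s z') : z = z' :=
  le_antisymm (hz.le_of_eq_zero hz'.lt hz'.eq_zero) (hz'.le_of_eq_zero hz.lt hz.eq_zero)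

lemma comp_add_const (hz : IsFirstZeroAfter f (s + c) z) :
    IsFirstZeroAfter (fun t => f (t + c)) s (z - c) :=
  ⟨by linarith [hz.lt], by simpa using hz.eq_zero,
    fun t hst htz => hz.ne_zero (t + c) (by linarith) (by linarith)⟩

lemma pos (hz : IsFirstZeroAfter f s z) (hf : Continuous f) (hd : HasDerivAt f d s) (hd0 : 0 < d)
    (hs : f s = 0) {t : ℝ} (ht : t ∈ Ioo s z) : 0 < f t := by
  obtain ⟨t₀, ht₀, hpos⟩ := exists_pos_of_hasDerivAt_pos hd hd0 hs ht.1
  by_contra! hle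
  obtain ⟨x, hx, hx0⟩ := intermediate_value_Ioo' ht₀.2.le hf.continuousOn
    ⟨lt_of_le_of_ne hle (hz.ne_zero t ht.1 ht.2), hpos⟩
  exact hz.ne_zero x (ht₀.1.trans hx.1) (hx.2.trans ht.2) hx0

lemma deriv_nonpos (hz : IsFirstZeroAfter f s z) (hd : HasDerivAt f d z)
    (hpos : ∀ t ∈ Ioo s z, 0 < f t) : d ≤ 0 := by
  by_contra! hd0
  obtain ⟨t, ht, hneg⟩ := exists_neg_of_hasDerivAt_pos hd hd0 hz.eq_zero hz.lt
  exact hneg.not_gt (hpos t ht)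

lemma deriv_neg (hz : IsFirstZeroAfter f s z) (hK : Continuous K) (hf : IsHillSolution K f f')
    (hs : f s = 0) (hs' : 0 < f' s) : f' z < 0 := by
  refine lt_of_le_of_ne (hz.deriv_nonpos (hf.hasDerivAt z)
    fun t => hz.pos hf.continuous (hf.hasDerivAt s) hs' hs) fun hz' => hs'.ne' ?_
  exact congrFun (hf.unique hK IsHillSolution.zero hz.eq_zero hz').2 s

end IsFirstZeroAfter

lemma exists_mem_Ioo_notMem_of_not_accPt {S : Set ℝ} (hS : ∀ x, ¬ AccPt x (𝓟 S)) {a b : ℝ}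
    (hab : a < b) : ∃ t ∈ Ioo a b, t ∉ S := by
  by_contra! h
  refine hS ((a + b) / 2) (accPt_iff_frequently_nhdsNE.2 (Eventually.frequently ?_))
  have hmem : Ioo a b ∈ 𝓝[≠] ((a + b) / 2) :=
    mem_nhdsWithin_of_mem_nhds (Ioo_mem_nhds (by linarith) (by linarith))
  exact Filter.mem_of_superset hmem h

lemma sturm_comparison {K₁ K₂ f f' g g' : ℝ → ℝ} {s zf zg : ℝ} (hle : ∀ t, K₁ t ≤ K₂ t)
    (hacc : ∀ x : ℝ, ¬ AccPt x (𝓟 {t : ℝ | K₁ t = K₂ t}))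
    (hf : IsHillSolution K₁ f f') (hg : IsHillSolution K₂ g g')
    (hf₀ : f s = 0) (hf₁ : 0 < f' s) (hg₀ : g s = 0) (hg₁ : 0 < g' s)
    (hzf : IsFirstZeroAfter f s zf) (hzg : IsFirstZeroAfter g s zg) : zg < zf := by
  by_contra! hzfg
  have hfpos : ∀ t ∈ Ioo s zf, 0 < f t := fun t =>
    hzf.pos hf.continuous (hf.hasDerivAt s) hf₁ hf₀
  have hgpos : ∀ t ∈ Ioo s zf, 0 < g t := fun t ht =>
    hzg.pos hg.continuous (hg.hasDerivAt s) hg₁ hg₀ ⟨ht.1, ht.2.trans_le hzfg⟩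
  have hgzf : 0 ≤ g zf := by
    rcases hzfg.lt_or_eq with hlt | heq
    · exact (hzg.pos hg.continuous (hg.hasDerivAt s) hg₁ hg₀ ⟨hzf.lt, hlt⟩).le
    · exact (heq ▸ hzg.eq_zero).ge
  set w := fun t => f t * g' t - g t * f' t
  have hw := hf.hasDerivAt_wronskian hg
  have hanti : AntitoneOn w (Icc s zf) := by
    refine antitoneOn_of_hasDerivWithinAt_nonpos (convex_Icc s zf)
      (HasDerivAt.continuousOn fun t _ => hw t) (fun t _ => (hw t).hasDerivWithinAt) ?_
    rw [interior_Icc]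
    exact fun t ht => mul_nonpos_of_nonpos_of_nonneg (sub_nonpos.2 (hle t))
      (mul_pos (hfpos t ht) (hgpos t ht)).le
  have hws : w s = 0 := by simp [w, hf₀, hg₀]
  have hwzf : 0 ≤ w zf := by
    simpa [w, hzf.eq_zero] using mul_nonpos_of_nonneg_of_nonpos hgzf
      (hzf.deriv_nonpos (hf.hasDerivAt zf) hfpos)
  have hw0 : ∀ t ∈ Icc s zf, w t = 0 := fun t ht => le_antisymm
    (hws ▸ hanti (left_mem_Icc.2 hzf.lt.le) ht ht.1)
    (hwzf.trans (hanti ht (right_mem_Icc.2 hzf.lt.le) ht.2))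
  obtain ⟨t, ht, hKt⟩ := exists_mem_Ioo_notMem_of_not_accPt hacc hzf.lt
  have hderiv : (K₁ t - K₂ t) * (f t * g t) = 0 :=
    (hw t).unique ((hasDerivAt_const t 0).congr_of_eventuallyEq
      (eventually_of_mem (Icc_mem_nhds ht.1 ht.2) hw0))
  exact hKt (sub_eq_zero.1 ((mul_eq_zero.1 hderiv).resolve_right
    (mul_pos (hfpos t ht) (hgpos t ht)).ne'))

structure IsNormalizedHillFamily (K : ℝ → ℝ) (y y' : ℝ → ℝ → ℝ) : Prop where
  isHillSolution : ∀ s, IsHillSolution K (y s) (y' s)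
  eq_zero : ∀ s, y s s = 0
  deriv_eq_one : ∀ s, y' s s = 1

namespace IsNormalizedHillFamily

variable {K : ℝ → ℝ} {y y' : ℝ → ℝ → ℝ} {z : ℝ → ℝ}

-- `y s = (y 0 s * y c - y c s * y 0) / y 0 c` for any `c` with `y 0 c ≠ 0`.
lemma continuous_uncurry (hK : Continuous K) (hy : IsNormalizedHillFamily K y y') :
    Continuous ↿y ∧ Continuous ↿y' := by
  obtain ⟨hsol, h0, h1⟩ := hy
  obtain ⟨c, hc⟩ : ∃ c, y 0 c ≠ 0 := by
    by_contra! h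
    have h00 : HasDerivAt (y 0) 0 0 := funext h ▸ hasDerivAt_const 0 0
    exact one_ne_zero (h1 0 ▸ ((hsol 0).hasDerivAt 0).unique h00)
  set W := y 0 c
  have hW : ∀ s, y 0 s * y' c s - y c s * y' 0 s = W := fun s => by
    simpa [h0, h1] using (hsol 0).wronskian_eq (hsol c) s c
  have hrep : ∀ s, y s = (fun t => y 0 s / W * y c t + -y c s / W * y 0 t) ∧
      y' s = (fun t => y 0 s / W * y' c t + -y c s / W * y' 0 t) := fun s =>
    (hsol s).unique hK (((hsol c).const_mul _).add ((hsol 0).const_mul _)) (t₀ := s)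
      (by rw [h0]; field_simp; ring) (by rw [h1]; field_simp; linarith [hW s])
  have := (hsol 0).continuous; have := (hsol c).continuous
  have := (hsol 0).continuous'; have := (hsol c).continuous'
  constructor
  · rw [show ↿y = fun p : ℝ × ℝ => y 0 p.1 / W * y c p.2 + -y c p.1 / W * y 0 p.2 from
      funext fun p => congrFun (hrep p.1).1 p.2]
    fun_prop
  · rw [show ↿y' = fun p : ℝ × ℝ => y 0 p.1 / W * y' c p.2 + -y c p.1 / W * y' 0 p.2 from
      funext fun p => congrFun (hrep p.1).2 p.2]
    fun_prop

lemma pos_of_mem_Ioo (hy : IsNormalizedHillFamily K y y')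
    (hz : ∀ s, IsFirstZeroAfter (y s) s (z s)) {s t : ℝ} (ht : t ∈ Ioo s (z s)) : 0 < y s t :=
  (hz s).pos (hy.isHillSolution s).continuous ((hy.isHillSolution s).hasDerivAt s)
    (hy.deriv_eq_one s ▸ one_pos) (hy.eq_zero s) ht

lemma eventually_firstZero_lt (hK : Continuous K) (hy : IsNormalizedHillFamily K y y')
    (hz : ∀ s, IsFirstZeroAfter (y s) s (z s)) {s₀ τ : ℝ} (hτ : z s₀ < τ) :
    ∀ᶠ s in 𝓝 s₀, z s < τ := by
  have hcont : ∀ t, ContinuousAt (fun s => y s t) s₀ := fun t =>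
    ((hy.continuous_uncurry hK).1.comp (continuous_id.prodMk continuous_const)).continuousAt
  obtain ⟨t₂, ht₂, hneg⟩ : ∃ t ∈ Ioo (z s₀) τ, y s₀ t < 0 := by
    have hd := (hz s₀).deriv_neg hK (hy.isHillSolution s₀) (hy.eq_zero s₀)
      (hy.deriv_eq_one s₀ ▸ one_pos)
    obtain ⟨t, ht, hpos⟩ := exists_pos_of_hasDerivAt_pos
      ((hy.isHillSolution s₀).hasDerivAt (z s₀)).neg (neg_pos.2 hd)
      (by simp [(hz s₀).eq_zero]) hτ
    exact ⟨t, ht, neg_pos.1 hpos⟩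
  have ht₁ : (s₀ + z s₀) / 2 ∈ Ioo s₀ (z s₀) :=
    ⟨by linarith [(hz s₀).lt], by linarith [(hz s₀).lt]⟩
  filter_upwards [eventually_lt_nhds ht₁.1,
    continuousAt_const.eventually_lt (hcont _) (hy.pos_of_mem_Ioo hz ht₁),
    (hcont t₂).eventually_lt continuousAt_const hneg] with s hs hpos hneg
  obtain ⟨x, hx, hx0⟩ := intermediate_value_Ioo' (ht₁.2.trans ht₂.1).le
    (hy.isHillSolution s).continuous.continuousOn ⟨hneg, hpos⟩
  exact ((hz s).le_of_eq_zero (hs.trans hx.1) hx0).trans_lt (hx.2.trans ht₂.2)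

lemma eventually_lt_firstZero (hK : Continuous K) (hy : IsNormalizedHillFamily K y y')
    (hz : ∀ s, IsFirstZeroAfter (y s) s (z s)) {s₀ τ : ℝ} (hτ : τ < z s₀) :
    ∀ᶠ s in 𝓝 s₀, τ < z s := by
  suffices h : ∀ τ ∈ Ioo s₀ (z s₀), ∀ᶠ s in 𝓝 s₀, τ < z s by
    have hmid : max τ ((s₀ + z s₀) / 2) ∈ Ioo s₀ (z s₀) :=
      ⟨lt_max_of_lt_right (by linarith [(hz s₀).lt]), max_lt hτ (by linarith [(hz s₀).lt])⟩
    exact (h _ hmid).mono fun s hs => (le_max_left _ _).trans_lt hs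
  intro τ hτ
  obtain ⟨hyc, hy'c⟩ := hy.continuous_uncurry hK
  obtain ⟨l, u, hlu, hy'pos⟩ :
      ∃ l u, s₀ ∈ Ioo l u ∧ ∀ s ∈ Ioo l u, ∀ t ∈ Ioo l u, 0 < y' s t := by
    have : ∀ᶠ p : ℝ × ℝ in 𝓝 s₀ ×ˢ 𝓝 s₀, 0 < y' p.1 p.2 := by
      rw [← nhds_prod_eq]
      exact continuousAt_const.eventually_lt hy'c.continuousAt (by simp [hy.deriv_eq_one])
    obtain ⟨U, hU, hUpos⟩ := (eventually_prod_self_iff (r := fun s t => 0 < y' s t)).1 this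
    obtain ⟨l, u, hlu, hsub⟩ := mem_nhds_iff_exists_Ioo_subset.1 hU
    exact ⟨l, u, hlu, fun s hs t ht => hUpos s (hsub hs) t (hsub ht)⟩
  set a := min ((s₀ + u) / 2) τ
  have hs₀a : s₀ < a := lt_min (by linarith [hlu.2]) hτ.1
  have hau : a < u := (min_le_left _ _).trans_lt (by linarith [hlu.2])
  have hnear : ∀ s ∈ Ioo l a, ∀ t ∈ Ioc s a, 0 < y s t := by
    intro s hs t ht
    have hmono : StrictMonoOn (y s) (Icc s a) := by
      refine strictMonoOn_of_hasDerivWithinAt_pos (convex_Icc s a)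
        (hy.isHillSolution s).continuous.continuousOn
        (fun x _ => ((hy.isHillSolution s).hasDerivAt x).hasDerivWithinAt) ?_
      rw [interior_Icc]
      exact fun x hx => hy'pos s ⟨hs.1, hs.2.trans hau⟩ x ⟨hs.1.trans hx.1, hx.2.trans hau⟩
    simpa [hy.eq_zero] using hmono (left_mem_Icc.2 hs.2.le) (Ioc_subset_Icc_self ht) ht.1
  have hfar : ∀ᶠ s in 𝓝 s₀, ∀ t ∈ Icc a τ, 0 < y s t :=
    isCompact_Icc.eventually_forall_of_forall_eventually fun t ht =>
      continuousAt_const.eventually_lt hyc.continuousAt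
        (hy.pos_of_mem_Ioo hz ⟨hs₀a.trans_le ht.1, ht.2.trans_lt hτ.2⟩)
  filter_upwards [Ioo_mem_nhds hlu.1 hs₀a, hfar] with s hs hpos
  by_contra! hzτ
  rcases le_total (z s) a with h | h
  · exact (hnear s hs (z s) ⟨(hz s).lt, h⟩).ne' (hz s).eq_zero
  · exact (hpos (z s) ⟨h, hzτ⟩).ne' (hz s).eq_zero

theorem continuous_firstZero (hK : Continuous K) (hy : IsNormalizedHillFamily K y y')
    (hz : ∀ s, IsFirstZeroAfter (y s) s (z s)) : Continuous z :=
  continuous_iff_continuousAt.2 fun _ => tendsto_order.2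
    ⟨fun _ => hy.eventually_lt_firstZero hK hz, fun _ => hy.eventually_firstZero_lt hK hz⟩

theorem firstZero_add_period (hK : Continuous K) (hy : IsNormalizedHillFamily K y y')
    (hz : ∀ s, IsFirstZeroAfter (y s) s (z s)) {L : ℝ} (hKper : Periodic K L) (s : ℝ) :
    z (s + L) = z s + L := by
  have hshifted := (hy.isHillSolution (s + L)).comp_add_const L
  rw [hKper.funext] at hshifted
  have hshift : (fun t => y (s + L) (t + L)) = y s :=
    (hshifted.unique hK (hy.isHillSolution s) (t₀ := s) (by simp [hy.eq_zero])
      (by simp [hy.deriv_eq_one])).1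
  have hzshift := (hz (s + L)).comp_add_const (c := L)
  rw [hshift] at hzshift
  linarith [(hz s).unique hzshift]

end IsNormalizedHillFamily

lemma Continuous.exists_forall_ge_of_periodic {f : ℝ → ℝ} {L : ℝ} (hf : Continuous f)
    (hper : Periodic f L) (hL : L ≠ 0) : ∃ s₀, ∀ s, f s ≤ f s₀ := by
  obtain ⟨_, ⟨s₀, rfl⟩, hmax⟩ :=
    (hper.compact_of_continuous hL hf).exists_isGreatest (range_nonempty f)
  exact ⟨s₀, fun s => hmax ⟨s, rfl⟩⟩

theorem conjugate_distance_uniform_ratio_general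
    (L : ℝ) (hL : 0 < L)
    (K1 K2 : ℝ → ℝ) (hK1 : Continuous K1) (hK2 : Continuous K2)
    (hK1per : ∀ t : ℝ, K1 (t + L) = K1 t) (hK2per : ∀ t : ℝ, K2 (t + L) = K2 t)
    (hle : ∀ t : ℝ, K1 t ≤ K2 t)
    (hacc : ∀ x : ℝ, ¬ AccPt x (Filter.principal {t : ℝ | K1 t = K2 t}))
    (y1 y1' y2 y2' : ℝ → ℝ → ℝ)
    (hy1 : ∀ s t : ℝ, HasDerivAt (y1 s) (y1' s t) t)
    (hy1' : ∀ s t : ℝ, HasDerivAt (y1' s) (-(K1 t) * y1 s t) t)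
    (hy2 : ∀ s t : ℝ, HasDerivAt (y2 s) (y2' s t) t)
    (hy2' : ∀ s t : ℝ, HasDerivAt (y2' s) (-(K2 t) * y2 s t) t)
    (h10 : ∀ s : ℝ, y1 s s = 0) (h11 : ∀ s : ℝ, y1' s s = 1)
    (h20 : ∀ s : ℝ, y2 s s = 0) (h21 : ∀ s : ℝ, y2' s s = 1)
    (z1 z2 : ℝ → ℝ)
    (hz1 : ∀ s : ℝ, s < z1 s ∧ y1 s (z1 s) = 0 ∧ ∀ t : ℝ, s < t → t < z1 s → y1 s t ≠ 0)
    (hz2 : ∀ s : ℝ, s < z2 s ∧ y2 s (z2 s) = 0 ∧ ∀ t : ℝ, s < t → t < z2 s → y2 s t ≠ 0) :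
    (∀ s : ℝ, 0 < z1 s - s) ∧ (∀ s : ℝ, 0 < z2 s - s) ∧
    Continuous (fun s : ℝ => z1 s - s) ∧ Continuous (fun s : ℝ => z2 s - s) ∧
    (∀ s : ℝ, z1 (s + L) - (s + L) = z1 s - s) ∧
    (∀ s : ℝ, z2 (s + L) - (s + L) = z2 s - s) ∧
    ∃ ρ : ℝ, 0 < ρ ∧ ρ < 1 ∧ ∀ s : ℝ, z2 s - s ≤ ρ * (z1 s - s) := by
  have hfam1 : IsNormalizedHillFamily K1 y1 y1' := ⟨fun s => ⟨hy1 s, hy1' s⟩, h10, h11⟩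
  have hfam2 : IsNormalizedHillFamily K2 y2 y2' := ⟨fun s => ⟨hy2 s, hy2' s⟩, h20, h21⟩
  have hfz1 : ∀ s, IsFirstZeroAfter (y1 s) s (z1 s) := fun s =>
    ⟨(hz1 s).1, (hz1 s).2.1, (hz1 s).2.2⟩
  have hfz2 : ∀ s, IsFirstZeroAfter (y2 s) s (z2 s) := fun s =>
    ⟨(hz2 s).1, (hz2 s).2.1, (hz2 s).2.2⟩
  have hd1 : ∀ s, 0 < z1 s - s := fun s => sub_pos.2 (hfz1 s).lt
  have hd2 : ∀ s, 0 < z2 s - s := fun s => sub_pos.2 (hfz2 s).lt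
  have hcont1 := (hfam1.continuous_firstZero hK1 hfz1).sub continuous_id
  have hcont2 := (hfam2.continuous_firstZero hK2 hfz2).sub continuous_id
  have hper1 : Periodic (fun s => z1 s - s) L := fun s => by
    simp only [hfam1.firstZero_add_period hK1 hfz1 hK1per]; ring
  have hper2 : Periodic (fun s => z2 s - s) L := fun s => by
    simp only [hfam2.firstZero_add_period hK2 hfz2 hK2per]; ring
  have hlt : ∀ s, z2 s - s < z1 s - s := fun s => sub_lt_sub_right (sturm_comparison hle hacc
    (hfam1.isHillSolution s) (hfam2.isHillSolution s) (h10 s) (h11 s ▸ one_pos) (h20 s)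
    (h21 s ▸ one_pos) (hfz1 s) (hfz2 s)) s
  obtain ⟨s₀, hmax⟩ := (hcont2.div hcont1 fun s => (hd1 s).ne').exists_forall_ge_of_periodic
    (hper2.div hper1) hL.ne'
  refine ⟨hd1, hd2, hcont1, hcont2, hper1, hper2, _, div_pos (hd2 s₀) (hd1 s₀),
    (div_lt_one (hd1 s₀)).2 (hlt s₀), fun s => (div_le_iff₀ (hd1 s)).1 (hmax s)⟩

/-- uniform ratio for distances to first conjugate points,
from the proof of Lemma 8.3.  With `K1, K2` continuous, `L`-periodic,
`δ² ≤ K1 ≤ K2`, equality only on a set with no accumulation point, and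
`z j s` the least zero in `(s, ∞)` of the solution of `y'' + K_j y = 0` with
`y s = 0`, `y' s = 1`, the functions `d j s = z j s - s` are positive,
continuous and `L`-periodic, and there is `ρ ∈ (0,1)` with
`d2 s ≤ ρ * d1 s` for all `s`. -/
theorem conjugate_distance_uniform_ratio
    (L δ : ℝ) (hL : 0 < L) (hδ : 0 < δ)
    (K1 K2 : ℝ → ℝ) (hK1 : Continuous K1) (hK2 : Continuous K2)
    (hK1per : ∀ t : ℝ, K1 (t + L) = K1 t) (hK2per : ∀ t : ℝ, K2 (t + L) = K2 t)
    (hlb : ∀ t : ℝ, δ ^ 2 ≤ K1 t) (hle : ∀ t : ℝ, K1 t ≤ K2 t)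
    (hacc : ∀ x : ℝ, ¬ AccPt x (Filter.principal {t : ℝ | K1 t = K2 t}))
    (y1 y1' y2 y2' : ℝ → ℝ → ℝ)
    (hy1 : ∀ s t : ℝ, HasDerivAt (y1 s) (y1' s t) t)
    (hy1' : ∀ s t : ℝ, HasDerivAt (y1' s) (-(K1 t) * y1 s t) t)
    (hy2 : ∀ s t : ℝ, HasDerivAt (y2 s) (y2' s t) t)
    (hy2' : ∀ s t : ℝ, HasDerivAt (y2' s) (-(K2 t) * y2 s t) t)
    (h10 : ∀ s : ℝ, y1 s s = 0) (h11 : ∀ s : ℝ, y1' s s = 1)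
    (h20 : ∀ s : ℝ, y2 s s = 0) (h21 : ∀ s : ℝ, y2' s s = 1)
    (z1 z2 : ℝ → ℝ)
    (hz1 : ∀ s : ℝ, s < z1 s ∧ y1 s (z1 s) = 0 ∧ ∀ t : ℝ, s < t → t < z1 s → y1 s t ≠ 0)
    (hz2 : ∀ s : ℝ, s < z2 s ∧ y2 s (z2 s) = 0 ∧ ∀ t : ℝ, s < t → t < z2 s → y2 s t ≠ 0) :
    (∀ s : ℝ, 0 < z1 s - s) ∧ (∀ s : ℝ, 0 < z2 s - s) ∧
    Continuous (fun s : ℝ => z1 s - s) ∧ Continuous (fun s : ℝ => z2 s - s) ∧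
    (∀ s : ℝ, z1 (s + L) - (s + L) = z1 s - s) ∧
    (∀ s : ℝ, z2 (s + L) - (s + L) = z2 s - s) ∧
    ∃ ρ : ℝ, 0 < ρ ∧ ρ < 1 ∧ ∀ s : ℝ, z2 s - s ≤ ρ * (z1 s - s) :=
  conjugate_distance_uniform_ratio_general L hL K1 K2 hK1 hK2 hK1per hK2per hle hacc y1 y1' y2 y2'
    hy1 hy1' hy2 hy2' h10 h11 h20 h21 z1 z2 hz1 hz2
end

section
/- Let n ≥ 1, ℓ > 0, δ > 0. Let A : [0, δ) × [0, ℓ] → M_{2n}(ℝ), (s, t) ↦ A_s(t), be continuous and continuously differentiable in s, with A_s(t)ᵀ·J + J·A_s(t) = 0 for all (s, t). For each s let X_s : [0, ℓ] → M_{2n}(ℝ) be the solution of ∂_t X_s(t) = A_s(t)·X_s(t) with X_s(0) = I. Then J · X_0(ℓ)⁻¹ · (∂_s X_s(ℓ))|_{s=0} = ∫_0^ℓ X_0(t)ᵀ · ( J · (∂_s A_s(t))|_{s=0} ) · X_0(t) dt. -/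
/-!
Put `Φ s = (X 0 ℓ)ᵀ J (X s ℓ)`. Because `(A 0 t)ᵀ J + J (A 0 t) = 0`, the derivative in `t` of
`(X 0 t)ᵀ J (X s t)` is `(X 0 t)ᵀ J (A s t - A 0 t) (X s t)`, so
`Φ s = J + ∫₀^ℓ (X 0 t)ᵀ J (A s t - A 0 t) (X s t) dt`. At `s = 0` this says that `X 0 ℓ` is
symplectic, hence `(X 0 ℓ)ᵀ J = J (X 0 ℓ)⁻¹`, and `Φ' 0 = (X 0 ℓ)ᵀ J DXl`. On the other hand the
integrand vanishes at `s = 0`, its difference quotients in `s` are bounded (mean value theorem and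
compactness of `[0, δ/2] × [0, ℓ]`), and `X s t → X 0 t` as `s → 0` (Grönwall), so dominated
convergence differentiates under the integral: `Φ' 0 = ∫₀^ℓ (X 0 t)ᵀ J (A' 0 t) (X 0 t) dt`.
-/

open Matrix

/-- The standard symplectic matrix `J = [[0, -I],[I, 0]]` in `n × n` block form. -/
def stdSymplecticJ (n : ℕ) : Matrix (Fin n ⊕ Fin n) (Fin n ⊕ Fin n) ℝ :=
  Matrix.fromBlocks 0 (-1) 1 0

open Set Filter Topology MeasureTheory intervalIntegral
open scoped Interval

section NormedSpace

variable {E : Type*} [NormedAddCommGroup E] [NormedSpace ℝ E] {a b : ℝ}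

theorem norm_le_gronwallBound_of_hasDerivWithinAt_Icc {f f' : ℝ → E} {δ K ε : ℝ}
    (hf : ∀ t ∈ Icc a b, HasDerivWithinAt f (f' t) (Icc a b) t) (ha : ‖f a‖ ≤ δ)
    (bound : ∀ t ∈ Ico a b, ‖f' t‖ ≤ K * ‖f t‖ + ε) :
    ∀ t ∈ Icc a b, ‖f t‖ ≤ gronwallBound δ K ε (t - a) :=
  norm_le_gronwallBound_of_norm_deriv_right_le (fun t ht => (hf t ht).continuousWithinAt)
    (fun t ht => (hf t (Ico_subset_Icc_self ht)).mono_of_mem_nhdsWithin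
      (Icc_mem_nhdsGE_of_mem ht)) ha bound

theorem hasDerivWithinAt_intervalIntegral_of_norm_sub_le [CompleteSpace E]
    {F : ℝ → ℝ → E} {F' : ℝ → E} {S : Set ℝ} {s₀ C : ℝ} (hs₀ : s₀ ∈ S)
    (hF_int : ∀ s ∈ S, IntervalIntegrable (F s) volume a b)
    (hF_lip : ∀ s ∈ S, ∀ t ∈ Ι a b, ‖F s t - F s₀ t‖ ≤ C * |s - s₀|)
    (hF' : ∀ t ∈ Ι a b, HasDerivWithinAt (F · t) (F' t) S s₀) :
    HasDerivWithinAt (fun s => ∫ t in a..b, F s t) (∫ t in a..b, F' t) S s₀ := by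
  have hslope : ∀ s ∈ S, slope (fun s => ∫ t in a..b, F s t) s₀ s
      = ∫ t in a..b, slope (F · t) s₀ s := by
    intro s hs
    simp only [slope_def_module]
    rw [← integral_sub (hF_int s hs) (hF_int s₀ hs₀), intervalIntegral.integral_smul]
  rw [hasDerivWithinAt_iff_tendsto_slope]
  refine (tendsto_integral_filter_of_dominated_convergence
    (F := fun s t => slope (F · t) s₀ s) (fun _ => C) ?_ ?_
    intervalIntegrable_const ?_).congr' ?_
  · refine eventually_nhdsWithin_of_forall fun s hs => ?_
    simp only [slope_def_module]
    exact ((hF_int s hs.1).sub (hF_int s₀ hs₀)).def'.aestronglyMeasurable.const_smul _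
  · refine eventually_nhdsWithin_of_forall fun s hs => ae_of_all _ fun t ht => ?_
    have hpos : 0 < |s - s₀| := abs_pos.2 (sub_ne_zero.2 hs.2)
    rw [slope_def_module, norm_smul, norm_inv, Real.norm_eq_abs, inv_mul_le_iff₀ hpos, mul_comm]
    exact hF_lip s hs.1 t ht
  · exact ae_of_all _ fun t ht => hasDerivWithinAt_iff_tendsto_slope.1 (hF' t ht)
  · exact eventually_nhdsWithin_of_forall fun s hs => (hslope s hs.1).symm

end NormedSpace

section NormedAlgebra

variable {E : Type*} [NormedRing E] [NormedAlgebra ℝ E] {a b K : ℝ}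

theorem HasDerivWithinAt.mul_continuousWithinAt_of_eq_zero {f g : ℝ → E} {f' : E}
    {S : Set ℝ} {s₀ : ℝ} (hf : HasDerivWithinAt f f' S s₀) (hf₀ : f s₀ = 0)
    (hg : ContinuousWithinAt g S s₀) :
    HasDerivWithinAt (fun s => f s * g s) (f' * g s₀) S s₀ := by
  rw [hasDerivWithinAt_iff_tendsto_slope] at hf ⊢
  have hslope : slope (fun s => f s * g s) s₀ = fun s => slope f s₀ s * g s := by
    ext s
    simp only [slope_def_module, hf₀, zero_mul, sub_zero, smul_mul_assoc]
  rw [hslope]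
  exact hf.mul (hg.tendsto.mono_left (nhdsWithin_mono _ sdiff_subset))

theorem norm_le_mul_exp_of_hasDerivWithinAt_mul {X A : ℝ → E}
    (hX : ∀ t ∈ Icc a b, HasDerivWithinAt X (A t * X t) (Icc a b) t)
    (hA : ∀ t ∈ Ico a b, ‖A t‖ ≤ K) :
    ∀ t ∈ Icc a b, ‖X t‖ ≤ ‖X a‖ * Real.exp (K * (t - a)) := by
  intro t ht
  rw [← gronwallBound_ε0]
  refine norm_le_gronwallBound_of_hasDerivWithinAt_Icc hX le_rfl (fun u hu => ?_) t ht
  rw [add_zero]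
  exact (norm_mul_le _ _).trans (mul_le_mul_of_nonneg_right (hA u hu) (norm_nonneg _))

theorem norm_sub_le_gronwallBound_of_hasDerivWithinAt_mul {X Y A B : ℝ → E} {ε : ℝ}
    (hX : ∀ t ∈ Icc a b, HasDerivWithinAt X (A t * X t) (Icc a b) t)
    (hY : ∀ t ∈ Icc a b, HasDerivWithinAt Y (B t * Y t) (Icc a b) t)
    (ha : X a = Y a) (hB : ∀ t ∈ Ico a b, ‖B t‖ ≤ K)
    (hAB : ∀ t ∈ Ico a b, ‖(A t - B t) * X t‖ ≤ ε) :
    ∀ t ∈ Icc a b, ‖X t - Y t‖ ≤ gronwallBound 0 K ε (t - a) := by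
  refine norm_le_gronwallBound_of_hasDerivWithinAt_Icc (fun t ht => (hX t ht).sub (hY t ht))
    (by rw [ha, sub_self, norm_zero]) fun t ht => ?_
  calc ‖A t * X t - B t * Y t‖ = ‖B t * (X t - Y t) + (A t - B t) * X t‖ := by noncomm_ring
    _ ≤ K * ‖X t - Y t‖ + ε := (norm_add_le _ _).trans (add_le_add
        ((norm_mul_le _ _).trans (mul_le_mul_of_nonneg_right (hB t ht) (norm_nonneg _)))
        (hAB t ht))

theorem continuousWithinAt_of_hasDerivWithinAt_mul {X A : ℝ → ℝ → E} {S : Set ℝ} {s₀ C : ℝ}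
    (hs₀ : s₀ ∈ S)
    (hX : ∀ s ∈ S, ∀ t ∈ Icc a b, HasDerivWithinAt (X s) (A s t * X s t) (Icc a b) t)
    (ha : ∀ s ∈ S, X s a = X s₀ a) (hA₀ : ∀ t ∈ Ico a b, ‖A s₀ t‖ ≤ K)
    (hA : ∀ s ∈ S, ∀ t ∈ Ico a b, ‖(A s t - A s₀ t) * X s t‖ ≤ C * |s - s₀|) :
    ∀ t ∈ Icc a b, ContinuousWithinAt (X · t) S s₀ := by
  intro t ht
  have hε : Tendsto (fun s => C * |s - s₀|) (𝓝[S] s₀) (𝓝 0) := by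
    have h : Continuous fun s => C * |s - s₀| := by fun_prop
    simpa using (h.tendsto s₀).mono_left nhdsWithin_le_nhds
  have hbound := ((gronwallBound_continuous_ε 0 K (t - a)).tendsto 0).comp hε
  rw [gronwallBound_ε0_δ0] at hbound
  refine tendsto_iff_norm_sub_tendsto_zero.2 <|
    squeeze_zero' (Eventually.of_forall fun _ => norm_nonneg _) ?_ hbound
  exact eventually_nhdsWithin_of_forall fun s hs =>
    norm_sub_le_gronwallBound_of_hasDerivWithinAt_mul (hX s hs) (hX s₀ hs₀) (ha s hs) hA₀
      (hA s hs) t ht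

theorem hasDerivWithinAt_integral_mul_sub_mul [CompleteSpace E] {P A' : ℝ → E}
    {A X : ℝ → ℝ → E} {S : Set ℝ} {s₀ C : ℝ} (hab : a ≤ b) (hs₀ : s₀ ∈ S) (hP : ContinuousOn P (Icc a b))
    (hX : ∀ s ∈ S, ∀ t ∈ Icc a b, HasDerivWithinAt (X s) (A s t * X s t) (Icc a b) t)
    (ha : ∀ s ∈ S, X s a = X s₀ a) (hAcont : ∀ s ∈ S, ContinuousOn (A s) (Icc a b))
    (hK : ∀ s ∈ S, ∀ t ∈ Icc a b, ‖A s t‖ ≤ K)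
    (hC : ∀ s ∈ S, ∀ t ∈ Icc a b, ‖A s t - A s₀ t‖ ≤ C * |s - s₀|)
    (hA' : ∀ t ∈ Icc a b, HasDerivWithinAt (A · t) (A' t) S s₀) :
    HasDerivWithinAt (fun s => ∫ t in a..b, P t * (A s t - A s₀ t) * X s t)
      (∫ t in a..b, P t * A' t * X s₀ t) S s₀ := by
  obtain ⟨PB, hPB⟩ := isCompact_Icc.exists_bound_of_continuousOn hP
  set XB := ‖X s₀ a‖ * Real.exp (|K| * (b - a))
  have hXB : ∀ s ∈ S, ∀ t ∈ Icc a b, ‖X s t‖ ≤ XB := by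
    intro s hs t ht
    refine (norm_le_mul_exp_of_hasDerivWithinAt_mul (hX s hs)
      (fun u hu => hK s hs u (Ico_subset_Icc_self hu)) t ht).trans ?_
    rw [ha s hs]
    refine mul_le_mul_of_nonneg_left (Real.exp_le_exp.2 ?_) (norm_nonneg _)
    exact (mul_le_mul_of_nonneg_right (le_abs_self K) (sub_nonneg.2 ht.1)).trans
      (mul_le_mul_of_nonneg_left (sub_le_sub_right ht.2 a) (abs_nonneg K))
  have hAX : ∀ s ∈ S, ∀ t ∈ Icc a b, ‖(A s t - A s₀ t) * X s t‖ ≤ C * XB * |s - s₀| := by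
    intro s hs t ht
    rw [mul_right_comm]
    exact (norm_mul_le _ _).trans (mul_le_mul (hC s hs t ht) (hXB s hs t ht) (norm_nonneg _)
      ((norm_nonneg _).trans (hC s hs t ht)))
  have hXcont := continuousWithinAt_of_hasDerivWithinAt_mul hs₀ hX ha
    (fun t ht => hK s₀ hs₀ t (Ico_subset_Icc_self ht))
    (fun s hs t ht => hAX s hs t (Ico_subset_Icc_self ht))
  have hIoc : Ι a b ⊆ Icc a b := by rw [uIoc_of_le hab]; exact Ioc_subset_Icc_self
  refine hasDerivWithinAt_intervalIntegral_of_norm_sub_le hs₀ (C := PB * (C * XB))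
    (fun s hs => ?_) (fun s hs t ht => ?_) (fun t ht => ?_)
  · exact ((hP.mul ((hAcont s hs).sub (hAcont s₀ hs₀))).mul
      fun t ht => (hX s hs t ht).continuousWithinAt).intervalIntegrable_of_Icc hab
  · rw [sub_self, mul_zero, zero_mul, sub_zero, mul_assoc, mul_assoc]
    exact (norm_mul_le _ _).trans (mul_le_mul (hPB t (hIoc ht)) (hAX s hs t (hIoc ht))
      (norm_nonneg _) ((norm_nonneg _).trans (hPB t (hIoc ht))))
  · exact (((hA' t (hIoc ht)).sub_const (A s₀ t)).const_mul (P t)).mul_continuousWithinAt_of_eq_zero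
      (by rw [sub_self, mul_zero]) (hXcont t (hIoc ht))

end NormedAlgebra

theorem hasDerivWithinAt_matrix_iff {m : Type*} [Fintype m] {F : ℝ → Matrix m m ℝ}
    {F' : Matrix m m ℝ} {S : Set ℝ} {x : ℝ} :
    HasDerivWithinAt F F' S x ↔ ∀ i j, HasDerivWithinAt (F · i j) (F' i j) S x :=
  hasDerivWithinAt_pi.trans (forall_congr' fun _ => hasDerivWithinAt_pi)

section SymplecticMatrix

-- Any submultiplicative norm would do; this one induces the product topology of `Matrix`.
attribute [local instance] Matrix.linftyOpNormedRing Matrix.linftyOpNormedAlgebra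

variable {m : Type*} [Fintype m] [DecidableEq m]

theorem intervalIntegral_matrix_apply {f : ℝ → Matrix m m ℝ} {a b : ℝ}
    (hf : ContinuousOn f (uIcc a b)) (i j : m) :
    (∫ t in a..b, f t) i j = ∫ t in a..b, f t i j :=
  ((Matrix.entryLinearMap ℝ ℝ i j).toContinuousLinearMap.intervalIntegral_comp_comm
    hf.intervalIntegrable).symm

theorem Matrix.transpose_mul_eq_mul_inv {R : Type*} [CommRing R] {P M : Matrix m m R}
    (hM : IsUnit M.det) (h : Pᵀ * M * P = M) : Pᵀ * M = M * P⁻¹ := by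
  have hinv : P⁻¹ = M⁻¹ * Pᵀ * M := Matrix.inv_eq_left_inv <| by
    rw [Matrix.mul_assoc, Matrix.mul_assoc, ← Matrix.mul_assoc Pᵀ, h, Matrix.nonsing_inv_mul M hM]
  rw [hinv, ← Matrix.mul_assoc, ← Matrix.mul_assoc, Matrix.mul_nonsing_inv M hM, Matrix.one_mul]

theorem integral_transpose_mul_mul_sub_mul {Y X A B : ℝ → Matrix m m ℝ} {M : Matrix m m ℝ}
    {a b : ℝ} (hab : a ≤ b)
    (hY : ∀ t ∈ Icc a b, HasDerivWithinAt Y (B t * Y t) (Icc a b) t)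
    (hX : ∀ t ∈ Icc a b, HasDerivWithinAt X (A t * X t) (Icc a b) t)
    (hA : ContinuousOn A (Icc a b)) (hB : ContinuousOn B (Icc a b))
    (hBM : ∀ t ∈ Icc a b, (B t)ᵀ * M + M * B t = 0) :
    ∫ t in a..b, (Y t)ᵀ * M * (A t - B t) * X t = (Y b)ᵀ * M * X b - (Y a)ᵀ * M * X a := by
  have hYT : ∀ t ∈ Icc a b, HasDerivWithinAt (fun t => (Y t)ᵀ) ((B t * Y t)ᵀ) (Icc a b) t :=
    fun t ht =>
      hasDerivWithinAt_matrix_iff.2 fun i j => hasDerivWithinAt_matrix_iff.1 (hY t ht) j i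
  have hderiv : ∀ t ∈ Icc a b, HasDerivWithinAt (fun t => (Y t)ᵀ * M * X t)
      ((Y t)ᵀ * M * (A t - B t) * X t) (Icc a b) t := by
    intro t ht
    refine (((hYT t ht).mul_const M).mul (hX t ht)).congr_deriv ?_
    rw [Matrix.transpose_mul, Matrix.mul_assoc (Y t)ᵀ, eq_neg_of_add_eq_zero_left (hBM t ht)]
    noncomm_ring
  have hXc : ContinuousOn X (Icc a b) := fun t ht => (hX t ht).continuousWithinAt
  have hYTc : ContinuousOn (fun t => (Y t)ᵀ) (Icc a b) := fun t ht => (hYT t ht).continuousWithinAt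
  refine integral_eq_sub_of_hasDerivAt_of_le hab (fun t ht => (hderiv t ht).continuousWithinAt)
    (fun t ht => (hderiv t (Ioo_subset_Icc_self ht)).hasDerivAt (Icc_mem_nhds ht.1 ht.2)) ?_
  exact (((hYTc.mul continuousOn_const).mul (hA.sub hB)).mul hXc).intervalIntegrable_of_Icc hab

variable {A A' X : ℝ → ℝ → Matrix m m ℝ} {M : Matrix m m ℝ} {σ ℓ : ℝ}

theorem hasDerivWithinAt_transpose_mul_mul (hσ : 0 ≤ σ) (hℓ : 0 ≤ ℓ)
    (hAcont : ContinuousOn (fun p : ℝ × ℝ => A p.1 p.2) (Icc 0 σ ×ˢ Icc 0 ℓ))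
    (hA'cont : ContinuousOn (fun p : ℝ × ℝ => A' p.1 p.2) (Icc 0 σ ×ˢ Icc 0 ℓ))
    (hA : ∀ s ∈ Icc 0 σ, ∀ t ∈ Icc 0 ℓ, HasDerivWithinAt (A · t) (A' s t) (Icc 0 σ) s)
    (hM : ∀ t ∈ Icc 0 ℓ, (A 0 t)ᵀ * M + M * A 0 t = 0) (hX0 : ∀ s ∈ Icc 0 σ, X s 0 = 1)
    (hX : ∀ s ∈ Icc 0 σ, ∀ t ∈ Icc 0 ℓ, HasDerivWithinAt (X s) (A s t * X s t) (Icc 0 ℓ) t) :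
    HasDerivWithinAt (fun s => (X 0 ℓ)ᵀ * M * X s ℓ)
      (∫ t in 0..ℓ, (X 0 t)ᵀ * M * A' 0 t * X 0 t) (Icc 0 σ) 0 := by
  have h0 : (0 : ℝ) ∈ Icc 0 σ := left_mem_Icc.2 hσ
  have hcompact : IsCompact (Icc 0 σ ×ˢ Icc (0 : ℝ) ℓ) := isCompact_Icc.prod isCompact_Icc
  obtain ⟨K, hK⟩ := hcompact.exists_bound_of_continuousOn hAcont
  obtain ⟨C, hC⟩ := hcompact.exists_bound_of_continuousOn hA'cont
  have hAlip : ∀ s ∈ Icc 0 σ, ∀ t ∈ Icc 0 ℓ, ‖A s t - A 0 t‖ ≤ C * |s - 0| := by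
    intro s hs t ht
    rw [sub_zero, abs_of_nonneg hs.1]
    simpa using norm_image_sub_le_of_norm_deriv_le_segment' (fun u hu => hA u hu t ht)
      (fun u hu => hC (u, t) ⟨Ico_subset_Icc_self hu, ht⟩) s hs
  have hΦ : ∀ s ∈ Icc 0 σ, (X 0 ℓ)ᵀ * M * X s ℓ
      = M + ∫ t in 0..ℓ, (X 0 t)ᵀ * M * (A s t - A 0 t) * X s t := by
    intro s hs
    rw [integral_transpose_mul_mul_sub_mul hℓ (hX 0 h0) (hX s hs) (hAcont.uncurry_left s hs)
      (hAcont.uncurry_left 0 h0) hM, hX0 0 h0, hX0 s hs]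
    simp
  refine ((hasDerivWithinAt_integral_mul_sub_mul hℓ h0 ?_ hX
    (fun s hs => by rw [hX0 s hs, hX0 0 h0]) (fun s hs => hAcont.uncurry_left s hs)
    (fun s hs t ht => hK (s, t) ⟨hs, ht⟩) hAlip (hA 0 h0)).const_add M).congr hΦ (hΦ 0 h0)
  exact (continuous_id.matrix_transpose.comp_continuousOn
    fun t ht => (hX 0 h0 t ht).continuousWithinAt).mul continuousOn_const

theorem mul_inv_mul_eq_integral_of_hasDerivWithinAt {DX : Matrix m m ℝ} (hσ : 0 < σ)
    (hℓ : 0 ≤ ℓ)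
    (hAcont : ContinuousOn (fun p : ℝ × ℝ => A p.1 p.2) (Icc 0 σ ×ˢ Icc 0 ℓ))
    (hA'cont : ContinuousOn (fun p : ℝ × ℝ => A' p.1 p.2) (Icc 0 σ ×ˢ Icc 0 ℓ))
    (hA : ∀ s ∈ Icc 0 σ, ∀ t ∈ Icc 0 ℓ, HasDerivWithinAt (A · t) (A' s t) (Icc 0 σ) s)
    (hM : ∀ t ∈ Icc 0 ℓ, (A 0 t)ᵀ * M + M * A 0 t = 0) (hMdet : IsUnit M.det)
    (hX0 : ∀ s ∈ Icc 0 σ, X s 0 = 1)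
    (hX : ∀ s ∈ Icc 0 σ, ∀ t ∈ Icc 0 ℓ, HasDerivWithinAt (X s) (A s t * X s t) (Icc 0 ℓ) t)
    (hDX : HasDerivWithinAt (fun s => X s ℓ) DX (Icc 0 σ) 0) :
    M * (X 0 ℓ)⁻¹ * DX = ∫ t in 0..ℓ, (X 0 t)ᵀ * (M * A' 0 t) * X 0 t := by
  have h0 : (0 : ℝ) ∈ Icc 0 σ := left_mem_Icc.2 hσ.le
  have hsymp : (X 0 ℓ)ᵀ * M * X 0 ℓ = M := by
    have h := integral_transpose_mul_mul_sub_mul hℓ (hX 0 h0) (hX 0 h0)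
      (hAcont.uncurry_left 0 h0) (hAcont.uncurry_left 0 h0) hM
    simpa [hX0 0 h0, eq_comm, sub_eq_zero] using h
  rw [← Matrix.transpose_mul_eq_mul_inv hMdet hsymp,
    (uniqueDiffOn_Icc hσ 0 h0).eq_deriv _ (hDX.const_mul _)
      (hasDerivWithinAt_transpose_mul_mul hσ.le hℓ hAcont hA'cont hA hM hX0 hX)]
  simp only [Matrix.mul_assoc]

end SymplecticMatrix

theorem bott_variational_formula_general
    (n : ℕ) (ℓ δ : ℝ) (hℓ : 0 < ℓ) (hδ : 0 < δ)
    (A A' : ℝ → ℝ → Matrix (Fin n ⊕ Fin n) (Fin n ⊕ Fin n) ℝ)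
    (X : ℝ → ℝ → Matrix (Fin n ⊕ Fin n) (Fin n ⊕ Fin n) ℝ)
    (DXl : Matrix (Fin n ⊕ Fin n) (Fin n ⊕ Fin n) ℝ)
    (hAcont : ContinuousOn (fun p : ℝ × ℝ => A p.1 p.2) (Set.Ico 0 δ ×ˢ Set.Icc 0 ℓ))
    (hA'cont : ContinuousOn (fun p : ℝ × ℝ => A' p.1 p.2) (Set.Ico 0 δ ×ˢ Set.Icc 0 ℓ))
    (hAderiv : ∀ s ∈ Set.Ico (0 : ℝ) δ, ∀ t ∈ Set.Icc (0 : ℝ) ℓ, ∀ i j : Fin n ⊕ Fin n,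
      HasDerivWithinAt (fun u : ℝ => A u t i j) (A' s t i j) (Set.Ico 0 δ) s)
    (hAsp : ∀ s ∈ Set.Ico (0 : ℝ) δ, ∀ t ∈ Set.Icc (0 : ℝ) ℓ,
      (A s t)ᵀ * stdSymplecticJ n + stdSymplecticJ n * A s t = 0)
    (hX0 : ∀ s ∈ Set.Ico (0 : ℝ) δ, X s 0 = 1)
    (hXode : ∀ s ∈ Set.Ico (0 : ℝ) δ, ∀ t ∈ Set.Icc (0 : ℝ) ℓ, ∀ i j : Fin n ⊕ Fin n,
      HasDerivWithinAt (fun u : ℝ => X s u i j) ((A s t * X s t) i j) (Set.Icc 0 ℓ) t)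
    (hDXl : ∀ i j : Fin n ⊕ Fin n,
      HasDerivWithinAt (fun s : ℝ => X s ℓ i j) (DXl i j) (Set.Ico 0 δ) 0) :
    ∀ i j : Fin n ⊕ Fin n,
      (stdSymplecticJ n * (X 0 ℓ)⁻¹ * DXl) i j
        = ∫ t in (0 : ℝ)..ℓ, ((X 0 t)ᵀ * (stdSymplecticJ n * A' 0 t) * X 0 t) i j := by
  have hS : Icc 0 (δ / 2) ⊆ Ico 0 δ := Icc_subset_Ico_right (by linarith)
  have hSℓ : Icc 0 (δ / 2) ×ˢ Icc 0 ℓ ⊆ Ico 0 δ ×ˢ Icc 0 ℓ := prod_mono hS subset_rfl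
  have h0 : (0 : ℝ) ∈ Ico 0 δ := ⟨le_rfl, hδ⟩
  have hX : ∀ s ∈ Icc 0 (δ / 2), ∀ t ∈ Icc 0 ℓ,
      HasDerivWithinAt (X s) (A s t * X s t) (Icc 0 ℓ) t :=
    fun s hs t ht => hasDerivWithinAt_matrix_iff.2 (hXode s (hS hs) t ht)
  have hformula := mul_inv_mul_eq_integral_of_hasDerivWithinAt (half_pos hδ) hℓ.le
    (hAcont.mono hSℓ) (hA'cont.mono hSℓ)
    (fun s hs t ht =>
      hasDerivWithinAt_matrix_iff.2 fun i j => (hAderiv s (hS hs) t ht i j).mono hS)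
    (hAsp 0 h0) (Matrix.isUnit_det_J (Fin n) ℝ) (fun s hs => hX0 s (hS hs)) hX
    (hasDerivWithinAt_matrix_iff.2 fun i j => (hDXl i j).mono hS)
  have hX0c : ContinuousOn (X 0) (Icc 0 ℓ) := continuousOn_pi.2 fun i => continuousOn_pi.2
    fun j t ht => (hXode 0 h0 t ht i j).continuousWithinAt
  intro i j
  rw [hformula, intervalIntegral_matrix_apply]
  rw [uIcc_of_le hℓ.le]
  exact ((continuous_id.matrix_transpose.comp_continuousOn hX0c).mul
    (continuousOn_const.mul (hA'cont.uncurry_left 0 h0))).mul hX0c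

/-- Bott's variational formula, Equation (star) of Lemma 7.2.
For a family `A s t ∈ sp(2n, ℝ)`, continuous on `[0,δ) × [0,ℓ]` and continuously
differentiable in `s` with derivative `A' s t`, let `X s` solve
`∂ₜ X s t = A s t * X s t`, `X s 0 = I`, and let `DXl` be the `s`-derivative of
`X s ℓ` at `s = 0`.  Then
`J · (X 0 ℓ)⁻¹ · DXl = ∫_0^ℓ (X 0 t)ᵀ · (J · A' 0 t) · (X 0 t) dt`. -/
theorem bott_variational_formula
    (n : ℕ) (hn : 1 ≤ n) (ℓ δ : ℝ) (hℓ : 0 < ℓ) (hδ : 0 < δ)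
    (A A' : ℝ → ℝ → Matrix (Fin n ⊕ Fin n) (Fin n ⊕ Fin n) ℝ)
    (X : ℝ → ℝ → Matrix (Fin n ⊕ Fin n) (Fin n ⊕ Fin n) ℝ)
    (DXl : Matrix (Fin n ⊕ Fin n) (Fin n ⊕ Fin n) ℝ)
    (hAcont : ContinuousOn (fun p : ℝ × ℝ => A p.1 p.2) (Set.Ico 0 δ ×ˢ Set.Icc 0 ℓ))
    (hA'cont : ContinuousOn (fun p : ℝ × ℝ => A' p.1 p.2) (Set.Ico 0 δ ×ˢ Set.Icc 0 ℓ))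
    (hAderiv : ∀ s ∈ Set.Ico (0 : ℝ) δ, ∀ t ∈ Set.Icc (0 : ℝ) ℓ, ∀ i j : Fin n ⊕ Fin n,
      HasDerivWithinAt (fun u : ℝ => A u t i j) (A' s t i j) (Set.Ico 0 δ) s)
    (hAsp : ∀ s ∈ Set.Ico (0 : ℝ) δ, ∀ t ∈ Set.Icc (0 : ℝ) ℓ,
      (A s t)ᵀ * stdSymplecticJ n + stdSymplecticJ n * A s t = 0)
    (hX0 : ∀ s ∈ Set.Ico (0 : ℝ) δ, X s 0 = 1)
    (hXode : ∀ s ∈ Set.Ico (0 : ℝ) δ, ∀ t ∈ Set.Icc (0 : ℝ) ℓ, ∀ i j : Fin n ⊕ Fin n,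
      HasDerivWithinAt (fun u : ℝ => X s u i j) ((A s t * X s t) i j) (Set.Icc 0 ℓ) t)
    (hDXl : ∀ i j : Fin n ⊕ Fin n,
      HasDerivWithinAt (fun s : ℝ => X s ℓ i j) (DXl i j) (Set.Ico 0 δ) 0) :
    ∀ i j : Fin n ⊕ Fin n,
      (stdSymplecticJ n * (X 0 ℓ)⁻¹ * DXl) i j
        = ∫ t in (0 : ℝ)..ℓ, ((X 0 t)ᵀ * (stdSymplecticJ n * A' 0 t) * X 0 t) i j :=
  bott_variational_formula_general n ℓ δ hℓ hδ A A' X DXl hAcont hA'cont hAderiv hAsp hX0 hXode hDXl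
end

section
/- Let n ≥ 2 and ℓ > 0. Let R, τ : [0, ℓ] → M_{n−1}(ℝ) be continuous with R(t) and τ(t) symmetric for all t, τ(t) positive semidefinite for all t ∈ [0, ℓ], and τ(t) positive definite for all t in some nonempty open subinterval of (0, ℓ). For each v ∈ ℝ^{n−1} × ℝ^{n−1} = ℝ^{2(n−1)} let (x_v, y_v) : [0, ℓ] → ℝ^{n−1} × ℝ^{n−1} be the solution of the linear system x' = y, y' = −R(t)·x with initial value (x_v(0), y_v(0)) = v. Then the quadratic form Q(v) = ∫_0^ℓ ⟨τ(t)·x_v(t), x_v(t)⟩ dt on ℝ^{2(n−1)} is positive definite: Q(v) ≥ 0 for all v, and Q(v) = 0 only for v = 0. -/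
/-!
`Q v ≥ 0` because `τ ≥ 0`. If `Q v = 0`, the continuous nonnegative integrand vanishes on
`[0, ℓ]`, so positive definiteness of `τ` on `(a, b)` forces `x v = 0` there, and then also
`y v = (x v)' = 0` there. The Jacobi system is linear with continuous coefficients, so by
uniqueness of solutions a solution vanishing at one time vanishes identically; in particular
`v = (x v 0, y v 0) = 0`.
-/

open Matrix Set Topology

theorem ODE_solution_eqOn_zero_of_linear {E : Type*} [NormedAddCommGroup E]
    [NormedSpace ℝ E] {A : ℝ → E →L[ℝ] E} {f : ℝ → E} {a b t₀ : ℝ}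
    (hA : ContinuousOn A (Icc a b))
    (hf : ∀ t ∈ Icc a b, HasDerivWithinAt f (A t (f t)) (Icc a b) t)
    (ht₀ : t₀ ∈ Icc a b) (hf₀ : f t₀ = 0) : EqOn f 0 (Icc a b) := by
  obtain ⟨C, hC⟩ := isCompact_Icc.exists_bound_of_continuousOn hA
  have hlip : ∀ t ∈ Icc a b, LipschitzOnWith C.toNNReal (A t) univ := fun t ht =>
    ((A t).lipschitz.weaken
      (norm_toNNReal (a := A t) ▸ Real.toNNReal_le_toNNReal (hC t ht))).lipschitzOnWith
  have hfc : ContinuousOn f (Icc a b) := fun t ht => (hf t ht).continuousWithinAt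
  have hzero : ∀ (s : Set ℝ) t, HasDerivWithinAt (fun _ => (0 : E)) (A t 0) s t :=
    fun s t => by simpa using hasDerivWithinAt_const t s (0 : E)
  intro t ht
  rcases le_total t t₀ with h | h
  · refine ODE_solution_unique_of_mem_Icc_left (s := fun _ => univ)
      (fun s hs => hlip s ⟨hs.1.le, hs.2.trans ht₀.2⟩)
      (hfc.mono (Icc_subset_Icc_right ht₀.2))
      (fun s hs => (hf s ⟨hs.1.le, hs.2.trans ht₀.2⟩).mono_of_mem_nhdsWithin
        (Icc_mem_nhdsLE_of_mem ⟨hs.1, hs.2.trans ht₀.2⟩))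
      (fun _ _ => mem_univ _) continuousOn_const (fun s _ => hzero _ s)
      (fun _ _ => mem_univ _) hf₀ ⟨ht.1, h⟩
  · refine ODE_solution_unique_of_mem_Icc_right (s := fun _ => univ)
      (fun s hs => hlip s ⟨ht₀.1.trans hs.1, hs.2.le⟩)
      (hfc.mono (Icc_subset_Icc_left ht₀.1))
      (fun s hs => (hf s ⟨ht₀.1.trans hs.1, hs.2.le⟩).mono_of_mem_nhdsWithin
        (Icc_mem_nhdsGE_of_mem ⟨ht₀.1.trans hs.1, hs.2⟩))
      (fun _ _ => mem_univ _) continuousOn_const (fun s _ => hzero _ s)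
      (fun _ _ => mem_univ _) hf₀ ⟨h, ht.2⟩

theorem intervalIntegral.eqOn_zero_of_integral_eq_zero {f : ℝ → ℝ} {a b : ℝ} (hab : a < b)
    (hf : ContinuousOn f (Icc a b)) (hnonneg : ∀ x ∈ Icc a b, 0 ≤ f x)
    (hint : ∫ x in a..b, f x = 0) : EqOn f 0 (Icc a b) := fun c hc =>
  le_antisymm (not_lt.1 fun hpos => (intervalIntegral.integral_pos hab hf
    (fun x hx => hnonneg x (Ioc_subset_Icc_self hx)) ⟨c, hc, hpos⟩).ne' hint) (hnonneg c hc)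

section Jacobi

variable {m : Type*} [Fintype m]

noncomputable def jacobiCLM (M : Matrix m m ℝ) :
    (m → ℝ) × (m → ℝ) →L[ℝ] (m → ℝ) × (m → ℝ) :=
  (ContinuousLinearMap.snd ℝ _ _).prod
    (-(M.mulVecLin.toContinuousLinearMap ∘L ContinuousLinearMap.fst ℝ (m → ℝ) (m → ℝ)))

@[simp]
theorem jacobiCLM_apply (M : Matrix m m ℝ) (p : (m → ℝ) × (m → ℝ)) :
    jacobiCLM M p = (p.2, -(M *ᵥ p.1)) :=
  rfl

theorem continuous_jacobiCLM : Continuous (jacobiCLM : Matrix m m ℝ → _) :=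
  continuous_clm_apply.2 fun p => by simp only [jacobiCLM_apply]; fun_prop

theorem jacobi_solution_eqOn_zero_of_eqOn_Ioo {R : ℝ → Matrix m m ℝ} {x y : ℝ → m → ℝ}
    {c d a b : ℝ} (hR : ContinuousOn R (Icc c d))
    (hx' : ∀ t ∈ Icc c d, HasDerivWithinAt x (y t) (Icc c d) t)
    (hy' : ∀ t ∈ Icc c d, HasDerivWithinAt y (-(R t *ᵥ x t)) (Icc c d) t)
    (hab : a < b) (hsub : Ioo a b ⊆ Icc c d) (hx : EqOn x 0 (Ioo a b)) :
    EqOn (fun t => (x t, y t)) 0 (Icc c d) := by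
  obtain ⟨t₀, ht₀⟩ := exists_between hab
  have hnhds : Ioo a b ∈ 𝓝 t₀ := Ioo_mem_nhds ht₀.1 ht₀.2
  have hyt₀ : y t₀ = 0 :=
    ((hx' t₀ (hsub ht₀)).hasDerivAt (Filter.mem_of_superset hnhds hsub)).unique
      ((hasDerivAt_const t₀ 0).congr_of_eventuallyEq (Filter.eventuallyEq_of_mem hnhds hx))
  exact ODE_solution_eqOn_zero_of_linear (continuous_jacobiCLM.comp_continuousOn hR)
    (fun t ht => (hx' t ht).prodMk (hy' t ht)) (hsub ht₀) (Prod.ext (hx ht₀) hyt₀)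

end Jacobi

theorem bott_quadratic_form_posdef_general
    (n : ℕ) (ℓ : ℝ) (hℓ : 0 < ℓ)
    (R τ : ℝ → Matrix (Fin (n - 1)) (Fin (n - 1)) ℝ)
    (hRcont : Continuous R) (hτcont : Continuous τ)
    (hτpsd : ∀ t ∈ Set.Icc (0 : ℝ) ℓ, ∀ w : Fin (n - 1) → ℝ, 0 ≤ w ⬝ᵥ (τ t).mulVec w)
    (hτpd : ∃ a b : ℝ, 0 ≤ a ∧ a < b ∧ b ≤ ℓ ∧
      ∀ t ∈ Set.Ioo a b, ∀ w : Fin (n - 1) → ℝ, w ≠ 0 → 0 < w ⬝ᵥ (τ t).mulVec w)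
    (x y : ((Fin (n - 1) → ℝ) × (Fin (n - 1) → ℝ)) → ℝ → (Fin (n - 1) → ℝ))
    (hx0 : ∀ v, x v 0 = v.1) (hy0 : ∀ v, y v 0 = v.2)
    (hxode : ∀ v, ∀ t ∈ Set.Icc (0 : ℝ) ℓ, ∀ i : Fin (n - 1),
      HasDerivWithinAt (fun u : ℝ => x v u i) (y v t i) (Set.Icc 0 ℓ) t)
    (hyode : ∀ v, ∀ t ∈ Set.Icc (0 : ℝ) ℓ, ∀ i : Fin (n - 1),
      HasDerivWithinAt (fun u : ℝ => y v u i) (-(R t).mulVec (x v t) i) (Set.Icc 0 ℓ) t) :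
    (∀ v, 0 ≤ ∫ t in (0 : ℝ)..ℓ, (τ t).mulVec (x v t) ⬝ᵥ x v t) ∧
    ∀ v, (∫ t in (0 : ℝ)..ℓ, (τ t).mulVec (x v t) ⬝ᵥ x v t) = 0 → v = 0 := by
  obtain ⟨a, b, ha, hab, hb, hpd⟩ := hτpd
  have hsub : Ioo a b ⊆ Icc 0 ℓ := fun t ht => ⟨ha.trans ht.1.le, ht.2.le.trans hb⟩
  have hQc : ∀ v, ContinuousOn (fun t => τ t *ᵥ x v t ⬝ᵥ x v t) (Icc 0 ℓ) := fun v => by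
    have hxc : ContinuousOn (x v) (Icc 0 ℓ) := fun t ht =>
      (hasDerivWithinAt_pi.2 (hxode v t ht)).continuousWithinAt
    rw [continuousOn_iff_continuous_domRestrict] at hxc ⊢
    exact ((hτcont.comp continuous_subtype_val).matrix_mulVec hxc).dotProduct hxc
  have hQnonneg : ∀ v, ∀ t ∈ Icc 0 ℓ, 0 ≤ τ t *ᵥ x v t ⬝ᵥ x v t := fun v t ht =>
    dotProduct_comm (x v t) _ ▸ hτpsd t ht (x v t)
  refine ⟨fun v => intervalIntegral.integral_nonneg hℓ.le (hQnonneg v), fun v hQ => ?_⟩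
  have hQzero := intervalIntegral.eqOn_zero_of_integral_eq_zero hℓ (hQc v) (hQnonneg v) hQ
  have hx : EqOn (x v) 0 (Ioo a b) := fun t ht => by_contra fun hne =>
    (hpd t ht _ hne).ne' (dotProduct_comm (x v t) _ ▸ hQzero (hsub ht))
  have h0 := jacobi_solution_eqOn_zero_of_eqOn_Ioo hRcont.continuousOn
    (fun t ht => hasDerivWithinAt_pi.2 (hxode v t ht))
    (fun t ht => hasDerivWithinAt_pi.2 (hyode v t ht)) hab hsub hx ⟨le_rfl, hℓ.le⟩
  exact Prod.ext ((hx0 v).symm.trans (congrArg Prod.fst h0))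
    ((hy0 v).symm.trans (congrArg Prod.snd h0))

/-- positive definiteness of the Bott quadratic form, concluding
step of Lemma 7.2.  Let `R, τ : [0,ℓ] → Sym(n-1)` be continuous, `τ t`
positive semidefinite for `t ∈ [0,ℓ]` and positive definite on some nonempty
open subinterval of `(0,ℓ)`.  For each initial value `v = (v₁, v₂)` let
`(x v, y v)` solve `x' = y`, `y' = -R t x`, `(x v 0, y v 0) = v`.  Then
`Q v = ∫_0^ℓ ⟨τ t · x v t, x v t⟩ dt` is a positive definite quadratic form. -/
theorem bott_quadratic_form_posdef
    (n : ℕ) (hn : 2 ≤ n) (ℓ : ℝ) (hℓ : 0 < ℓ)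
    (R τ : ℝ → Matrix (Fin (n - 1)) (Fin (n - 1)) ℝ)
    (hRcont : Continuous R) (hτcont : Continuous τ)
    (hRsymm : ∀ t : ℝ, (R t)ᵀ = R t) (hτsymm : ∀ t : ℝ, (τ t)ᵀ = τ t)
    (hτpsd : ∀ t ∈ Set.Icc (0 : ℝ) ℓ, ∀ w : Fin (n - 1) → ℝ, 0 ≤ w ⬝ᵥ (τ t).mulVec w)
    (hτpd : ∃ a b : ℝ, 0 ≤ a ∧ a < b ∧ b ≤ ℓ ∧
      ∀ t ∈ Set.Ioo a b, ∀ w : Fin (n - 1) → ℝ, w ≠ 0 → 0 < w ⬝ᵥ (τ t).mulVec w)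
    (x y : ((Fin (n - 1) → ℝ) × (Fin (n - 1) → ℝ)) → ℝ → (Fin (n - 1) → ℝ))
    (hx0 : ∀ v, x v 0 = v.1) (hy0 : ∀ v, y v 0 = v.2)
    (hxode : ∀ v, ∀ t ∈ Set.Icc (0 : ℝ) ℓ, ∀ i : Fin (n - 1),
      HasDerivWithinAt (fun u : ℝ => x v u i) (y v t i) (Set.Icc 0 ℓ) t)
    (hyode : ∀ v, ∀ t ∈ Set.Icc (0 : ℝ) ℓ, ∀ i : Fin (n - 1),
      HasDerivWithinAt (fun u : ℝ => y v u i) (-(R t).mulVec (x v t) i) (Set.Icc 0 ℓ) t) :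
    (∀ v, 0 ≤ ∫ t in (0 : ℝ)..ℓ, (τ t).mulVec (x v t) ⬝ᵥ x v t) ∧
    ∀ v, (∫ t in (0 : ℝ)..ℓ, (τ t).mulVec (x v t) ⬝ᵥ x v t) = 0 → v = 0 :=
  bott_quadratic_form_posdef_general n ℓ hℓ R τ hRcont hτcont hτpsd hτpd x y hx0 hy0 hxode hyode
end
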